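/- Let g > 0, T > 0, let f : ℝ → ℝ be C¹ and T-periodic, let t̄₀ satisfy f'(t̄₀) = 0, and let m be a positive integer. Define tₙ = t̄₀ + n·T·m and vₙ = T·g·m/2 for all n ≥ 0. Then for every n the single-ball bounce equations hold: f(tₙ) + vₙ·(tₙ₊₁ − tₙ) − (g/2)·(tₙ₊₁ − tₙ)² = f(tₙ₊₁) and vₙ₊₁ = g·(tₙ₊₁ − tₙ) − vₙ + 2f'(tₙ₊₁). In particular the post-collision speeds are constant. -/
import Mathlib


open Filter Topology

lemma deriv_periodic_aux {f : ℝ → ℝ} {T : ℝ} (hfper : Function.Periodic f T) :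
    Function.Periodic (deriv f) T := by
  intro x
  have h : (fun y => f (y + T)) = f := funext fun y => hfper y
  calc deriv f (x + T) = deriv (fun y => f (y + T)) x := (deriv_comp_add_const f T x).symm
    _ = deriv f x := by rw [h]

/-- The periodic trajectory `γ₁` from the proof of Theorem 3,2: if
`f'(t̄₀) = 0` and `m` is a positive integer, then the sequence of collision
times `tₙ = t̄₀ + n·T·m` with constant post-collision velocities
`vₙ = T·g·m/2` satisfies the single-ball bounce equations. -/
theorem periodic_bouncing_trajectory
    (g T : ℝ) (hg : 0 < g) (hT : 0 < T)
    (f : ℝ → ℝ) (hf : ContDiff ℝ 1 f) (hfper : Function.Periodic f T)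
    (tb : ℝ) (htb : deriv f tb = 0) (m : ℕ) (hm : 0 < m)
    (t v : ℕ → ℝ)
    (ht : ∀ n : ℕ, t n = tb + n * T * m)
    (hv : ∀ n : ℕ, v n = T * g * m / 2) :
    ∀ n : ℕ,
      f (t n) + v n * (t (n + 1) - t n) - g / 2 * (t (n + 1) - t n) ^ 2
        = f (t (n + 1)) ∧
      v (n + 1) = g * (t (n + 1) - t n) - v n + 2 * deriv f (t (n + 1)) := by
  intro n
  have hdiff : t (n + 1) - t n = T * m := by
    rw [ht, ht]; push_cast; ring
  have hfn : f (t (n + 1)) = f (t n) := by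
    have := (hfper.nat_mul m) (t n)
    have ht1 : t (n + 1) = t n + (m : ℝ) * T := by rw [ht, ht]; push_cast; ring
    rw [ht1, this]
  have hder : deriv f (t (n + 1)) = 0 := by
    have hp := (deriv_periodic_aux hfper).nat_mul ((n + 1) * m)
    have := hp tb
    have ht1 : t (n + 1) = tb + ((n + 1) * m : ℕ) * T := by rw [ht]; push_cast; ring
    rw [ht1, this, htb]
  constructor
  · rw [hdiff, hfn, hv n]; ring
  · rw [hdiff, hder, hv, hv]; ring
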